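/- arXiv:1904.06766 — 3 statements merged into one kernel-verified Lean document; each statement's English description precedes it below -/
import Mathlib

section
/- Let X be a standard Borel space. The bag-difference map (D₁, D₂) ↦ D₁ - D₂ (the multiset difference, in which the multiplicity of each element x in the result is max(m₁(x) - m₂(x), 0), where mᵢ(x) is its multiplicity in Dᵢ) from Multiset X × Multiset X to Multiset X is measurable, where Multiset X carries the counting σ-algebra and Multiset X × Multiset X the corresponding product σ-algebra. -/
/- `countIn D E` is the number of elements of the finite multiset `D` lying in the set `E`,
counted with multiplicity. -/
open Classical in
noncomputable def countIn {X : Type*} (D : Multiset X) (E : Set X) : ℕ :=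
  (D.filter (· ∈ E)).card

/-- The counting σ-algebra on the space of finite multisets over a measurable space `X`:
generated by the counting events `C(E,n) = {D | countIn D E = n}` for `E` measurable, `n : ℕ`. -/
def countingMS (X : Type*) [MeasurableSpace X] : MeasurableSpace (Multiset X) :=
  MeasurableSpace.generateFrom
    {C : Set (Multiset X) |
      ∃ (E : Set X) (n : ℕ), MeasurableSet E ∧ C = {D : Multiset X | countIn D E = n}}

section Aux

variable {X : Type*}

/-- The "atom" of the first `m` half-space sets determined by a sign pattern `σ`. -/
def bagAtom (f : X → ℝ) (e : ℕ → ℚ) (m : ℕ) (σ : Fin m → Bool) : Set X :=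
  {x | ∀ k : Fin m, (f x < (e k : ℝ) ↔ σ k = true)}

open Classical in
/-- The signature of a point with respect to the first `m` half-spaces. -/
noncomputable def bagSig (f : X → ℝ) (e : ℕ → ℚ) (m : ℕ) (x : X) : Fin m → Bool :=
  fun k => decide (f x < (e k : ℝ))

lemma mem_bagAtom_iff (f : X → ℝ) (e : ℕ → ℚ) (m : ℕ) (σ : Fin m → Bool) (x : X) :
    x ∈ bagAtom f e m σ ↔ bagSig f e m x = σ := by
  classical
  simp only [bagAtom, bagSig, Set.mem_setOf_eq, funext_iff]
  refine forall_congr' fun k => ?_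
  by_cases h : f x < (e k : ℝ) <;> cases hσ : σ k <;> simp [h, hσ]

lemma measurableSet_bagAtom [MeasurableSpace X] {f : X → ℝ} (hf : Measurable f)
    (e : ℕ → ℚ) (m : ℕ) (σ : Fin m → Bool) : MeasurableSet (bagAtom f e m σ) := by
  have : bagAtom f e m σ = ⋂ k : Fin m,
      (if σ k then f ⁻¹' (Set.Iio (e k : ℝ)) else (f ⁻¹' (Set.Iio (e k : ℝ)))ᶜ) := by
    ext x
    simp only [bagAtom, Set.mem_setOf_eq, Set.mem_iInter]
    refine forall_congr' fun k => ?_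
    cases hσ : σ k <;> simp [hσ]
  rw [this]
  exact MeasurableSet.iInter fun k => by
    split <;> [exact hf measurableSet_Iio; exact (hf measurableSet_Iio).compl]

open Classical in
/-- `countIn` as a sum of counts over any finset containing the support. -/
lemma countIn_eq_sum {D : Multiset X} {S : Finset X} (hD : D.toFinset ⊆ S) (B : Set X) :
    countIn D B = ∑ x ∈ S.filter (· ∈ B), D.count x := by
  classical
  unfold countIn
  rw [← Multiset.toFinset_sum_count_eq (Multiset.filter (· ∈ B) D)]
  rw [Finset.sum_subset
      (Finset.Subset.trans (Multiset.toFinset_subset.mpr (Multiset.filter_subset _ _)) hD)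
      (fun x _ hx => by
        simpa [Multiset.count_eq_zero, Multiset.mem_toFinset] using hx)]
  rw [Finset.sum_filter]
  refine Finset.sum_congr rfl fun x _ => ?_
  rw [Multiset.count_filter]

open Classical in
/-- Key combinatorial lemma: once the signature map separates the points of the supports
inside `E`, the sum over atoms of truncated count differences computes `countIn (D₁ - D₂) E`. -/
lemma bag_key (f : X → ℝ) (e : ℕ → ℚ) (E : Set X) (D₁ D₂ : Multiset X) (m : ℕ)
    (hinj : ∀ x ∈ (D₁ + D₂).toFinset.filter (· ∈ E), ∀ y ∈ (D₁ + D₂).toFinset.filter (· ∈ E),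
      bagSig f e m x = bagSig f e m y → x = y) :
    ∑ σ : Fin m → Bool,
        (countIn D₁ (E ∩ bagAtom f e m σ) - countIn D₂ (E ∩ bagAtom f e m σ)) =
      countIn (D₁ - D₂) E := by
  classical
  set S : Finset X := (D₁ + D₂).toFinset with hS
  set T : Finset X := S.filter (· ∈ E) with hT
  have hS1 : D₁.toFinset ⊆ S := Multiset.toFinset_subset.mpr (Multiset.subset_of_le (Multiset.le_add_right _ _))
  have hS2 : D₂.toFinset ⊆ S := Multiset.toFinset_subset.mpr (Multiset.subset_of_le (Multiset.le_add_left _ _))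
  have hSsub : (D₁ - D₂).toFinset ⊆ S :=
    Finset.Subset.trans (Multiset.toFinset_subset.mpr (Multiset.subset_of_le (Multiset.sub_le_self _ _))) hS1
  have hcnt : ∀ (D : Multiset X), D.toFinset ⊆ S → ∀ σ,
      countIn D (E ∩ bagAtom f e m σ) = ∑ x ∈ T.filter (fun x => bagSig f e m x = σ), D.count x := by
    intro D hD σ
    rw [countIn_eq_sum hD]
    refine Finset.sum_congr ?_ fun _ _ => rfl
    ext x
    simp only [Finset.mem_filter, hT, Set.mem_inter_iff, mem_bagAtom_iff, and_assoc]
  -- restrict the sum over all σ to the image of T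
  have hoff : ∀ σ ∉ T.image (bagSig f e m),
      (countIn D₁ (E ∩ bagAtom f e m σ) - countIn D₂ (E ∩ bagAtom f e m σ)) = 0 := by
    intro σ hσ
    have hempty : T.filter (fun x => bagSig f e m x = σ) = ∅ := by
      refine Finset.filter_eq_empty_iff.mpr fun {x} hx hsig => ?_
      exact hσ (Finset.mem_image.mpr ⟨x, hx, hsig⟩)
    rw [hcnt D₁ hS1 σ, hcnt D₂ hS2 σ, hempty]
    simp
  rw [← Finset.sum_subset (Finset.subset_univ (T.image (bagSig f e m)))
      (fun σ _ hσ => hoff σ hσ)]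
  have hinj' : ∀ x ∈ T, ∀ y ∈ T, bagSig f e m x = bagSig f e m y → x = y := hinj
  rw [Finset.sum_image hinj']
  -- for x ∈ T, the fiber of its signature is {x}
  have hfib : ∀ x ∈ T, T.filter (fun y => bagSig f e m y = bagSig f e m x) = {x} := by
    intro x hx
    ext y
    simp only [Finset.mem_filter, Finset.mem_singleton]
    constructor
    · rintro ⟨hy, hsig⟩; exact hinj' y hy x hx hsig
    · rintro rfl; exact ⟨hx, rfl⟩
  have hterm : ∀ x ∈ T,
      (countIn D₁ (E ∩ bagAtom f e m (bagSig f e m x)) -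
        countIn D₂ (E ∩ bagAtom f e m (bagSig f e m x))) = D₁.count x - D₂.count x := by
    intro x hx
    rw [hcnt D₁ hS1 _, hcnt D₂ hS2 _, hfib x hx]
    simp
  rw [Finset.sum_congr rfl hterm]
  rw [countIn_eq_sum hSsub E]
  exact Finset.sum_congr rfl fun x _ => (Multiset.count_sub x D₁ D₂).symm

open Classical in
/-- Existence of a separating level for any pair of multisets. -/
lemma bag_exists_sep (f : X → ℝ) (hf : Function.Injective f) (e : ℕ → ℚ)
    (he : Function.Surjective e) (E : Set X) (D₁ D₂ : Multiset X) :
    ∃ N : ℕ, ∀ m ≥ N, ∀ x ∈ (D₁ + D₂).toFinset.filter (· ∈ E),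
      ∀ y ∈ (D₁ + D₂).toFinset.filter (· ∈ E), bagSig f e m x = bagSig f e m y → x = y := by
  classical
  have hsep : ∀ x y : X, x ≠ y → ∃ k : ℕ,
      ¬ ((f x < (e k : ℝ)) ↔ (f y < (e k : ℝ))) := by
    intro x y hxy
    have hfxy : f x ≠ f y := fun h => hxy (hf h)
    rcases lt_or_gt_of_ne hfxy with h | h
    · obtain ⟨q, hq1, hq2⟩ := exists_rat_btwn h
      obtain ⟨k, rfl⟩ := he q
      exact ⟨k, by simp [hq1, not_lt.mpr hq2.le]⟩
    · obtain ⟨q, hq1, hq2⟩ := exists_rat_btwn h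
      obtain ⟨k, rfl⟩ := he q
      exact ⟨k, by simp [hq1, not_lt.mpr hq2.le, iff_comm]⟩
  set T := (D₁ + D₂).toFinset.filter (· ∈ E) with hT
  set K : X → X → ℕ := fun x y =>
    if h : x ≠ y then Nat.find (hsep x y h) else 0 with hK
  refine ⟨((T ×ˢ T).sup fun q => K q.1 q.2) + 1, fun m hm x hx y hy hsig => ?_⟩
  by_contra hxy
  have hk : K x y < m := by
    calc K x y ≤ (T ×ˢ T).sup (fun q => K q.1 q.2) :=
          Finset.le_sup (f := fun q => K q.1 q.2) (b := (x, y)) (Finset.mem_product.mpr ⟨hx, hy⟩)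
    _ < m := hm
  have hKxy : K x y = Nat.find (hsep x y hxy) := by rw [hK]; simp [hxy]
  have hspec : ¬ ((f x < (e (K x y) : ℝ)) ↔ (f y < (e (K x y) : ℝ))) := by
    rw [hKxy]; exact Nat.find_spec (hsep x y hxy)
  have := congrFun hsig ⟨K x y, hk⟩
  simp only [bagSig] at this
  exact hspec (by simpa [decide_eq_decide] using this)

/-- Measurability of the counting function for a fixed measurable set. -/
lemma measurable_countIn [MeasurableSpace X] {B : Set X} (hB : MeasurableSet B) :
    @Measurable (Multiset X) ℕ (countingMS X) _ (fun D => countIn D B) := by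
  letI : MeasurableSpace (Multiset X) := countingMS X
  refine measurable_to_countable' fun n => ?_
  exact MeasurableSpace.measurableSet_generateFrom ⟨B, n, hB, rfl⟩

end Aux

open Classical in
theorem bagDifference_measurable {X : Type*} [MeasurableSpace X] [StandardBorelSpace X] :
    @Measurable _ _ ((countingMS X).prod (countingMS X)) (countingMS X)
      (fun p : Multiset X × Multiset X => p.1 - p.2) := by
  obtain ⟨f, hf⟩ := MeasureTheory.exists_measurableEmbedding_real (α := X)
  set e : ℕ → ℚ := fun n => (Denumerable.eqv ℚ).symm n with he
  have hesurj : Function.Surjective e := (Denumerable.eqv ℚ).symm.surjective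
  letI mM : MeasurableSpace (Multiset X) := countingMS X
  letI mP : MeasurableSpace (Multiset X × Multiset X) := mM.prod mM
  show @Measurable _ _ mP mM (fun p : Multiset X × Multiset X => p.1 - p.2)
  refine measurable_generateFrom ?_
  rintro C ⟨E, n, hE, rfl⟩
  -- the approximating functions
  set g : ℕ → Multiset X × Multiset X → ℕ := fun m p =>
    ∑ σ : Fin m → Bool,
      (countIn p.1 (E ∩ bagAtom f e m σ) - countIn p.2 (E ∩ bagAtom f e m σ)) with hg
  have hgmeas : ∀ m, Measurable (g m) := by
    intro m
    refine Finset.measurable_sum _ fun σ _ => ?_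
    have h1 : Measurable fun p : Multiset X × Multiset X =>
        countIn p.1 (E ∩ bagAtom f e m σ) :=
      (measurable_countIn (hE.inter (measurableSet_bagAtom hf.measurable e m σ))).comp measurable_fst
    have h2 : Measurable fun p : Multiset X × Multiset X =>
        countIn p.2 (E ∩ bagAtom f e m σ) :=
      (measurable_countIn (hE.inter (measurableSet_bagAtom hf.measurable e m σ))).comp measurable_snd
    exact h1.sub h2
  have hkey : ∀ p : Multiset X × Multiset X, ∃ N, ∀ m ≥ N,
      g m p = countIn (p.1 - p.2) E := by
    intro p
    obtain ⟨N, hN⟩ := bag_exists_sep f hf.injective e hesurj E p.1 p.2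
    exact ⟨N, fun m hm => bag_key f e E p.1 p.2 m (hN m hm)⟩
  have hset : (fun p : Multiset X × Multiset X => p.1 - p.2) ⁻¹'
        {D : Multiset X | countIn D E = n} =
      ⋃ N : ℕ, ⋂ m : ℕ, ⋂ _ : N ≤ m, {p | g m p = n} := by
    ext p
    simp only [Set.mem_preimage, Set.mem_setOf_eq, Set.mem_iUnion, Set.mem_iInter]
    constructor
    · intro hp
      obtain ⟨N, hN⟩ := hkey p
      exact ⟨N, fun m hm => by rw [hN m hm, hp]⟩
    · rintro ⟨N, hN⟩
      obtain ⟨N', hN'⟩ := hkey p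
      have := hN (max N N') (le_max_left _ _)
      rw [hN' (max N N') (le_max_right _ _)] at this
      exact this
  rw [hset]
  exact MeasurableSet.iUnion fun N => MeasurableSet.iInter fun m =>
    MeasurableSet.iInter fun _ => hgmeas m (measurableSet_singleton n)
end

section
/- Let X be a standard Borel space. The min-intersection map (D₁, D₂) ↦ D₁ ∩ D₂ (the multiset intersection, in which the multiplicity of each element is the minimum of its multiplicities in D₁ and D₂) from Multiset X × Multiset X to Multiset X is measurable, where Multiset X carries the counting σ-algebra and Multiset X × Multiset X the corresponding product σ-algebra. -/
/-!
Sort the points of `X` into the countably many measurable cells `{x | c x = j}` of a map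
`c : X → ι`. Once `c` is injective on the support of `D₁ + D₂`, each cell contains at most one
point of either multiset, so the number of points of `D₁ ∩ D₂` in `E` is the sum over the cells
of the minimum of the numbers of points of `D₁` and of `D₂` in `E ∩ {c = j}`; this sum is a
measurable function of `(D₁, D₂)`. For a standard Borel space, embed `X` measurably into `ℝ` by
`f` and take `c k x = ⌊k f(x)⌋`: any finite set is separated by `c k` for large `k`, so
`(D₁, D₂) ↦ |(D₁ ∩ D₂) ∩ E|` is a pointwise limit of measurable functions.
-/

open MeasureTheory Filter Set
open scoped ENNReal

namespace Multiset

variable {α β : Type*} [DecidableEq α] [DecidableEq β]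

theorem count_map_of_injOn {f : α → β} {s : Set α} (hf : InjOn f s) {u : Multiset α}
    (hu : ∀ y ∈ u, y ∈ s) {x : α} (hx : x ∈ s) : count (f x) (map f u) = count x u := by
  by_cases hxu : x ∈ u
  · exact count_map_eq_count f u (hf.mono hu) x hxu
  · rw [count_eq_zero_of_notMem hxu, count_eq_zero, mem_map]
    rintro ⟨y, hyu, hyx⟩
    exact hxu (hf (hu y hyu) hx hyx ▸ hyu)

theorem map_inter_of_injOn {f : α → β} {s t : Multiset α}
    (hf : InjOn f {x | x ∈ s + t}) : map f (s ∩ t) = map f s ∩ map f t := by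
  have hs : ∀ y ∈ s, y ∈ s + t := fun y hy => mem_add.2 (Or.inl hy)
  have ht : ∀ y ∈ t, y ∈ s + t := fun y hy => mem_add.2 (Or.inr hy)
  have hst : ∀ y ∈ s ∩ t, y ∈ s + t := fun y hy => hs y (mem_of_le inter_le_left hy)
  ext b
  by_cases hb : ∃ x ∈ s + t, f x = b
  · obtain ⟨x, hx, rfl⟩ := hb
    rw [count_inter, count_map_of_injOn hf hst hx, count_map_of_injOn hf hs hx,
      count_map_of_injOn hf ht hx, count_inter]
  · push Not at hb
    have hzero : ∀ u : Multiset α, (∀ y ∈ u, y ∈ s + t) → count b (map f u) = 0 :=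
      fun u hu => count_eq_zero.2 fun h => by
        obtain ⟨y, hy, rfl⟩ := mem_map.1 h
        exact hb y (hu y hy) rfl
    rw [count_inter, hzero _ hst, hzero _ hs, hzero _ ht, min_self]

theorem card_eq_tsum_count (s : Multiset β) : (card s : ℝ≥0∞) = ∑' b, (count b s : ℝ≥0∞) := by
  rw [tsum_eq_sum (s := s.toFinset) fun b hb => by
      rw [count_eq_zero.2 (mt mem_toFinset.2 hb), Nat.cast_zero],
    ← Nat.cast_sum, toFinset_sum_count_eq]

end Multiset

section countIn

variable {X ι : Type*}

open Classical in
theorem countIn_inter_preimage_singleton (D : Multiset X) (E : Set X) (c : X → ι) (j : ι) :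
    countIn D (E ∩ c ⁻¹' {j}) = ((D.filter (· ∈ E)).map c).count j := by
  simp [countIn, Multiset.count_map, Multiset.filter_filter, and_comm, eq_comm]

open Classical in
theorem countIn_inter_eq_tsum_min {c : X → ι} {D₁ D₂ : Multiset X}
    (hc : InjOn c {x | x ∈ D₁ + D₂}) (E : Set X) :
    (countIn (D₁ ∩ D₂) E : ℝ≥0∞) =
      ∑' j, ((min (countIn D₁ (E ∩ c ⁻¹' {j})) (countIn D₂ (E ∩ c ⁻¹' {j})) : ℕ) : ℝ≥0∞) := by
  have hc' : InjOn c {x | x ∈ D₁.filter (· ∈ E) + D₂.filter (· ∈ E)} :=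
    hc.mono fun x hx => Multiset.mem_of_le (add_le_add (Multiset.filter_le _ _)
      (Multiset.filter_le _ _)) hx
  simp_rw [countIn_inter_preimage_singleton, ← Multiset.count_inter,
    ← Multiset.card_eq_tsum_count, ← Multiset.map_inter_of_injOn hc', Multiset.card_map,
    ← Multiset.filter_inter]
  rfl

end countIn

theorem eventually_injOn_of_eventually_ne {X ι γ : Type*} {l : Filter γ} {c : γ → X → ι}
    (hsep : ∀ x y, x ≠ y → ∀ᶠ k in l, c k x ≠ c k y) {s : Set X} (hs : s.Finite) :
    ∀ᶠ k in l, InjOn (c k) s := by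
  show ∀ᶠ k in l, ∀ x ∈ s, ∀ y ∈ s, c k x = c k y → x = y
  refine (eventually_all_finite hs).2 fun x _ => (eventually_all_finite hs).2 fun y _ => ?_
  by_cases hxy : x = y
  · exact Eventually.of_forall fun _ _ => hxy
  · exact (hsep x y hxy).mono fun _ hk h => absurd h hk

theorem eventually_floor_mul_natCast_ne {a b : ℝ} (h : a ≠ b) :
    ∀ᶠ k : ℕ in atTop, ⌊a * k⌋ ≠ ⌊b * k⌋ := by
  have hgrow : Tendsto (fun k : ℕ => |a - b| * k) atTop atTop :=
    tendsto_natCast_atTop_atTop.const_mul_atTop (abs_pos.2 (sub_ne_zero.2 h))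
  filter_upwards [hgrow.eventually_gt_atTop 1] with k hk hfloor
  have := Int.abs_sub_lt_one_of_floor_eq_floor hfloor
  rw [← sub_mul, abs_mul, Nat.abs_cast] at this
  linarith

section countingMS

variable {X : Type*} [MeasurableSpace X]

theorem measurable_countIn_s3 {E : Set X} (hE : MeasurableSet E) :
    Measurable[countingMS X] (countIn · E) :=
  let _ := countingMS X
  measurable_to_countable' fun n => MeasurableSpace.measurableSet_generateFrom ⟨E, n, hE, rfl⟩

theorem measurable_countingMS_of_measurable_countIn {Ω : Type*} [MeasurableSpace Ω]
    {g : Ω → Multiset X} (h : ∀ E, MeasurableSet E → Measurable fun ω => countIn (g ω) E) :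
    Measurable[_, countingMS X] g :=
  measurable_generateFrom fun _ ⟨E, n, hE, hC⟩ => hC ▸ h E hE (measurableSet_singleton n)

open Classical in
theorem measurable_inter_of_eventually_ne {ι : Type*} [Countable ι] [MeasurableSpace ι]
    [MeasurableSingletonClass ι] {c : ℕ → X → ι} (hc : ∀ k, Measurable (c k))
    (hsep : ∀ x y, x ≠ y → ∀ᶠ k in atTop, c k x ≠ c k y) :
    @Measurable _ _ ((countingMS X).prod (countingMS X)) (countingMS X)
      (fun p : Multiset X × Multiset X => p.1 ∩ p.2) := by
  let _ := countingMS X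
  refine measurable_countingMS_of_measurable_countIn fun E hE => ?_
  have hcell : ∀ k j, Measurable (countIn · (E ∩ c k ⁻¹' {j})) :=
    fun k j => measurable_countIn_s3 (hE.inter (hc k (measurableSet_singleton j)))
  have hlim : Measurable fun p : Multiset X × Multiset X => (countIn (p.1 ∩ p.2) E : ℝ≥0∞) := by
    refine measurable_of_tendsto_metrizable (f := fun k p =>
        ∑' j, ((min (countIn p.1 (E ∩ c k ⁻¹' {j})) (countIn p.2 (E ∩ c k ⁻¹' {j})) : ℕ) : ℝ≥0∞))
      (fun k => ?_) (tendsto_pi_nhds.2 fun p => tendsto_nhds_of_eventually_eq ?_)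
    · have := hcell k
      fun_prop
    · filter_upwards [eventually_injOn_of_eventually_ne hsep (p.1 + p.2).finite_toSet]
        with k hk using (countIn_inter_eq_tsum_min hk E).symm
  exact measurable_to_countable' fun n => by
    simpa [Set.preimage, Nat.cast_inj] using hlim (measurableSet_singleton (n : ℝ≥0∞))

end countingMS

open Classical in
theorem minIntersection_measurable {X : Type*} [MeasurableSpace X] [StandardBorelSpace X] :
    @Measurable _ _ ((countingMS X).prod (countingMS X)) (countingMS X)
      (fun p : Multiset X × Multiset X => p.1 ∩ p.2) := by
  obtain ⟨f, hf⟩ := exists_measurableEmbedding_real X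
  exact measurable_inter_of_eventually_ne (c := fun k x => ⌊f x * k⌋)
    (fun k => (hf.measurable.mul_const _).floor)
    fun x y hxy => eventually_floor_mul_natCast_ne (hf.injective.ne hxy)
end

section
/- Let X and Y be standard Borel spaces and let f : X → Y be a measurable function. The map D ↦ D.map f (applying f to every element of the multiset, preserving multiplicities) from Multiset X to Multiset Y is measurable with respect to the counting σ-algebras. (In particular, renaming of attributes, reordering of the attributes within the type of a relation, and projection onto a subtuple of attributes are measurable queries.) -/
lemma countIn_map {X Y : Type*} (f : X → Y) (D : Multiset X) (E : Set Y) :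
    countIn (D.map f) E = countIn D (f ⁻¹' E) := by
  classical
  simp only [countIn, Multiset.filter_map, Multiset.card_map]
  rfl

theorem multisetMap_measurable {X Y : Type*} [MeasurableSpace X] [StandardBorelSpace X]
    [MeasurableSpace Y] [StandardBorelSpace Y] (f : X → Y) (hf : Measurable f) :
    @Measurable _ _ (countingMS X) (countingMS Y)
      (fun D : Multiset X => D.map f) := by
  apply @measurable_generateFrom _ _ (countingMS X)
  rintro C ⟨E, n, hE, rfl⟩
  have : (fun D : Multiset X => D.map f) ⁻¹' {D : Multiset Y | countIn D E = n}
      = {D : Multiset X | countIn D (f ⁻¹' E) = n} := by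
    ext D
    simp [countIn_map]
  rw [this]
  exact MeasurableSpace.measurableSet_generateFrom ⟨f ⁻¹' E, n, hf hE, rfl⟩
end
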